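/- Let k₁,…,k_m be positive integers with N_i = k₁+⋯+k_i, N_m ≤ n (set N₀ = 0), and let A₁,…,A_m ∈ S_n have the staircase shape: for each i, the lower-right (n−N_{i−1})×(n−N_{i−1}) principal submatrix of A_i equals [[Â_i, 0],[0, 0]] for some k_i×k_i positive definite matrix Â_i. Let c' ∈ S_n be such that its lower-right (n−N_m)×(n−N_m) principal submatrix π̄_{N_m}(c') is positive semidefinite. Then for every ε > 0 there exist nonnegative reals α₁,…,α_m such that dist(c' + α₁A₁ + ⋯ + α_mA_m, K_n) < ε; in particular, inf over α₁,…,α_m ≥ 0 of dist(c' + Σ_i α_iA_i, K_n) equals 0. -/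

import Mathlib

open Matrix

attribute [local instance] Matrix.frobeniusNormedAddCommGroup

noncomputable section

abbrev MS (n : ℕ) := Matrix (Fin n) (Fin n) ℝ

def PSD (n : ℕ) : Set (MS n) := {x | x.PosSemidef}

/-- The principal submatrix of `x` with rows and columns in `[a, b)`; for `a = j`,
`b = n` this is `π̄_j(x)`, the lower-right `(n−j)×(n−j)` principal submatrix. -/
def blk (n a b : ℕ) (x : MS n) : Matrix (Fin (b - a)) (Fin (b - a)) ℝ :=
  fun i j => if h : a + i.1 < n ∧ a + j.1 < n then x ⟨a + i.1, h.1⟩ ⟨a + j.1, h.2⟩ else 0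

/-- `x` has the staircase block form: its lower-right `(n−a)×(n−a)` principal
submatrix equals `[[Â, 0], [0, 0]]` where `Â`, occupying rows/columns `[a, b)`,
is positive definite. -/
def staircase (n a b : ℕ) (x : MS n) : Prop :=
  (blk n a b x).PosDef ∧
    ∀ i j : Fin n, a ≤ i.1 → a ≤ j.1 → (b ≤ i.1 ∨ b ≤ j.1) → x i j = 0

/-! Call `M` `ε`-nearly PSD from `a` when `vᵀ M v ≥ -ε ‖v‖²` for every `v` supported on the
indices `≥ a`. Walk down the staircase: if `M` is `ε/2`-nearly PSD from `b` and `A` has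
staircase shape with positive definite block `Â` on `[a, b)`, then `M + t A` is `ε`-nearly PSD
from `a` for large `t`. Indeed, splitting `v = u + w` with `u` supported on `[a, b)` and `w` on
`[b, n)`, the zeros of `A` give `vᵀ A v = uᵀ Â u ≥ λ ‖u‖²`, and this penalty absorbs `uᵀ M u`,
`uᵀ M w` and `wᵀ M u`, which Cauchy–Schwarz and AM–GM bound below by `-(ε/4) ‖·‖² - C ‖u‖²`.
Starting from `c'`, PSD from `N m`, this makes `c' + Σ αᵢ Aᵢ` `ε`-nearly PSD from `0`, so
`c' + Σ αᵢ Aᵢ + ε I` is PSD and at distance `ε ‖I‖`. -/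

attribute [local instance] Matrix.frobeniusNormSMulClass

namespace Matrix

lemma dotProduct_self_nonneg {ι : Type*} [Fintype ι] (v : ι → ℝ) : 0 ≤ v ⬝ᵥ v :=
  Finset.sum_nonneg fun i _ => mul_self_nonneg (v i)

open scoped MatrixOrder in
lemma PosDef.exists_pos_mul_dotProduct_self_le {ι : Type*} [Fintype ι] [DecidableEq ι]
    {B : Matrix ι ι ℝ} (hB : B.PosDef) :
    ∃ r > 0, ∀ x : ι → ℝ, r * (x ⬝ᵥ x) ≤ x ⬝ᵥ B *ᵥ x := by
  cases isEmpty_or_nonempty ι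
  · exact ⟨1, one_pos, fun x => by simp [dotProduct]⟩
  obtain ⟨r, hr, hle⟩ := (CFC.exists_pos_algebraMap_le_iff hB.isHermitian.isSelfAdjoint).2
    fun x hx => hB.isStrictlyPositive.spectrum_pos hx
  refine ⟨r, hr, fun x => ?_⟩
  simpa [Algebra.algebraMap_eq_smul_one, sub_mulVec, smul_mulVec, dotProduct_sub] using
    (le_iff.mp hle).dotProduct_mulVec_nonneg x

lemma sq_dotProduct_mulVec_le {ι κ : Type*} [Fintype ι] [Fintype κ] (M : Matrix ι κ ℝ)
    (x : ι → ℝ) (y : κ → ℝ) :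
    (x ⬝ᵥ M *ᵥ y) ^ 2 ≤ (∑ i, ∑ j, M i j ^ 2) * (x ⬝ᵥ x) * (y ⬝ᵥ y) := by
  have hrow : ∀ i, (M *ᵥ y) i ^ 2 ≤ (∑ j, M i j ^ 2) * (y ⬝ᵥ y) := fun i => by
    simpa [mulVec, dotProduct, sq] using Finset.sum_mul_sq_le_sq_mul_sq Finset.univ (M i) y
  calc (x ⬝ᵥ M *ᵥ y) ^ 2 ≤ (x ⬝ᵥ x) * ∑ i, (M *ᵥ y) i ^ 2 := by
        simpa [dotProduct, sq] using Finset.sum_mul_sq_le_sq_mul_sq Finset.univ x (M *ᵥ y)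
    _ ≤ (x ⬝ᵥ x) * ∑ i, (∑ j, M i j ^ 2) * (y ⬝ᵥ y) := by
        gcongr with i
        · exact dotProduct_self_nonneg x
        · exact hrow i
    _ = (∑ i, ∑ j, M i j ^ 2) * (x ⬝ᵥ x) * (y ⬝ᵥ y) := by rw [← Finset.sum_mul]; ring

lemma dotProduct_comp_of_injective {ι κ R : Type*} [Fintype ι] [Fintype κ]
    [NonUnitalNonAssocSemiring R] {e : ι → κ} (he : Function.Injective e) (x y : κ → R)
    (hy : ∀ p ∉ Set.range e, y p = 0) : (x ∘ e) ⬝ᵥ (y ∘ e) = x ⬝ᵥ y :=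
  Fintype.sum_of_injective e he _ _ (fun p hp => by simp [hy p hp]) fun _ => rfl

lemma dotProduct_mulVec_submatrix_comp {ι κ R : Type*} [Fintype ι] [Fintype κ]
    [NonUnitalCommSemiring R] {e : ι → κ} (he : Function.Injective e) (A : Matrix κ κ R)
    (x : κ → R) (hx : ∀ p ∉ Set.range e, x p = 0) :
    (x ∘ e) ⬝ᵥ A.submatrix e e *ᵥ (x ∘ e) = x ⬝ᵥ A *ᵥ x := by
  have hmulVec : A.submatrix e e *ᵥ (x ∘ e) = (A *ᵥ x) ∘ e :=
    funext fun i => dotProduct_comp_of_injective he (A (e i)) x hx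
  rw [hmulVec, dotProduct_comm, dotProduct_comp_of_injective he _ x hx, dotProduct_comm]

end Matrix

lemma neg_le_of_sq_le_mul {z S a b ε : ℝ} (hS : 0 ≤ S) (ha : 0 ≤ a) (hb : 0 ≤ b) (hε : 0 < ε)
    (h : z ^ 2 ≤ S * a * b) : -(ε / 4 * b + S / ε * a) ≤ z := by
  refine (abs_le_of_sq_le_sq' (h.trans ?_) (by positivity)).1
  have hsq : (ε / 4 * b + S / ε * a) ^ 2 - S * a * b = (ε / 4 * b - S / ε * a) ^ 2 := by
    field_simp
    ring
  nlinarith [sq_nonneg (ε / 4 * b - S / ε * a)]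

section Staircase

variable {n : ℕ}

def blkEmb (a b : ℕ) (hbn : b ≤ n) (i : Fin (b - a)) : Fin n := ⟨a + i.1, by omega⟩

lemma blkEmb_injective {a b : ℕ} (hbn : b ≤ n) : Function.Injective (blkEmb a b hbn) :=
  fun i j h => Fin.ext (by simpa [blkEmb] using h)

lemma blk_eq_submatrix {a b : ℕ} (hbn : b ≤ n) (x : MS n) :
    blk n a b x = x.submatrix (blkEmb a b hbn) (blkEmb a b hbn) := by
  ext i j
  simp [blk, blkEmb, show a + i.1 < n by omega, show a + j.1 < n by omega]

lemma apply_eq_zero_of_notMem_range_blkEmb {a b : ℕ} (hbn : b ≤ n) {v : Fin n → ℝ}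
    (hv : ∀ p : Fin n, p.1 < a ∨ b ≤ p.1 → v p = 0) :
    ∀ p ∉ Set.range (blkEmb a b hbn), v p = 0 := by
  intro p hp
  refine hv p (by_contra fun h => hp ⟨⟨p.1 - a, by omega⟩, Fin.ext ?_⟩)
  simp [blkEmb]
  omega

lemma dotProduct_mulVec_blk {a b : ℕ} (hbn : b ≤ n) (x : MS n) {v : Fin n → ℝ}
    (hv : ∀ p : Fin n, p.1 < a ∨ b ≤ p.1 → v p = 0) :
    (v ∘ blkEmb a b hbn) ⬝ᵥ blk n a b x *ᵥ (v ∘ blkEmb a b hbn) = v ⬝ᵥ x *ᵥ v := by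
  rw [blk_eq_submatrix hbn, dotProduct_mulVec_submatrix_comp (blkEmb_injective hbn) x v
    (apply_eq_zero_of_notMem_range_blkEmb hbn hv)]

lemma dotProduct_self_comp_blkEmb {a b : ℕ} (hbn : b ≤ n) {v : Fin n → ℝ}
    (hv : ∀ p : Fin n, p.1 < a ∨ b ≤ p.1 → v p = 0) :
    (v ∘ blkEmb a b hbn) ⬝ᵥ (v ∘ blkEmb a b hbn) = v ⬝ᵥ v :=
  dotProduct_comp_of_injective (blkEmb_injective hbn) v v
    (apply_eq_zero_of_notMem_range_blkEmb hbn hv)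

lemma staircase.exists_pos_mul_dotProduct_self_le {a b : ℕ} (hbn : b ≤ n) {A : MS n}
    (hA : staircase n a b A) :
    ∃ r > 0, ∀ u : Fin n → ℝ, (∀ p : Fin n, p.1 < a ∨ b ≤ p.1 → u p = 0) →
      r * (u ⬝ᵥ u) ≤ u ⬝ᵥ A *ᵥ u := by
  obtain ⟨r, hr, hB⟩ := hA.1.exists_pos_mul_dotProduct_self_le
  refine ⟨r, hr, fun u hu => ?_⟩
  simpa [dotProduct_mulVec_blk hbn A hu, dotProduct_self_comp_blkEmb hbn hu] using
    hB (u ∘ blkEmb a b hbn)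

lemma staircase.dotProduct_mulVec_eq_zero {a b : ℕ} (hab : a ≤ b) {A : MS n}
    (hA : staircase n a b A) {x y : Fin n → ℝ} (hx : ∀ p : Fin n, p.1 < a → x p = 0)
    (hy : ∀ p : Fin n, p.1 < b → y p = 0) :
    x ⬝ᵥ A *ᵥ y = 0 ∧ y ⬝ᵥ A *ᵥ x = 0 := by
  simp only [dotProduct, mulVec, Finset.mul_sum]
  constructor <;> refine Finset.sum_eq_zero fun p _ => Finset.sum_eq_zero fun q _ => ?_
  · rcases lt_or_ge p.1 a with hp | hp
    · simp [hx p hp]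
    rcases lt_or_ge q.1 b with hq | hq
    · simp [hy q hq]
    simp [hA.2 p q hp (by omega) (Or.inr hq)]
  · rcases lt_or_ge p.1 b with hp | hp
    · simp [hy p hp]
    rcases lt_or_ge q.1 a with hq | hq
    · simp [hx q hq]
    simp [hA.2 p q (by omega) hq (Or.inl hp)]

lemma exists_split_at {a : ℕ} (b : ℕ) {v : Fin n → ℝ} (hv : ∀ p : Fin n, p.1 < a → v p = 0) :
    ∃ u w : Fin n → ℝ, v = u + w ∧ (∀ p : Fin n, p.1 < a ∨ b ≤ p.1 → u p = 0) ∧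
      (∀ p : Fin n, p.1 < b → w p = 0) ∧ v ⬝ᵥ v = u ⬝ᵥ u + w ⬝ᵥ w := by
  refine ⟨fun p => if p.1 < b then v p else 0, fun p => if p.1 < b then 0 else v p,
    funext fun p => ?_, ?_, fun p hp => by simp [hp], ?_⟩
  · by_cases h : p.1 < b <;> simp [h]
  · rintro p (hp | hp)
    · simp [hv p hp]
    · simp [show ¬p.1 < b by omega]
  · simp only [dotProduct, ← Finset.sum_add_distrib]
    refine Finset.sum_congr rfl fun p _ => ?_
    by_cases h : p.1 < b <;> simp [h]

def NearlyPSDFrom (a : ℕ) (ε : ℝ) (M : MS n) : Prop :=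
  ∀ v : Fin n → ℝ, (∀ p : Fin n, p.1 < a → v p = 0) → -(ε * (v ⬝ᵥ v)) ≤ v ⬝ᵥ M *ᵥ v

lemma NearlyPSDFrom.mono {a : ℕ} {δ ε : ℝ} {M : MS n} (h : NearlyPSDFrom a δ M) (hδε : δ ≤ ε) :
    NearlyPSDFrom a ε M := fun v hv =>
  (neg_le_neg (mul_le_mul_of_nonneg_right hδε (dotProduct_self_nonneg v))).trans (h v hv)

lemma NearlyPSDFrom.exists_add_smul {a b : ℕ} (hab : a ≤ b) (hbn : b ≤ n) {M A : MS n}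
    (hA : staircase n a b A) {ε : ℝ} (hε : 0 < ε) (hM : NearlyPSDFrom b (ε / 2) M) :
    ∃ t : ℝ, 0 ≤ t ∧ NearlyPSDFrom a ε (M + t • A) := by
  obtain ⟨r, hr, hAu⟩ := hA.exists_pos_mul_dotProduct_self_le hbn
  set S := ∑ i, ∑ j, M i j ^ 2
  have hS : 0 ≤ S := by positivity
  -- one `S / ε * ‖u‖²` for each of the estimates `huu`, `huw`, `hwu` below
  set t := 3 * S / (ε * r) with ht
  refine ⟨t, by positivity, fun v hv => ?_⟩
  obtain ⟨u, w, rfl, hu, hw, hnorm⟩ := exists_split_at b hv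
  have hAv : (u + w) ⬝ᵥ A *ᵥ (u + w) = u ⬝ᵥ A *ᵥ u := by
    have huw := hA.dotProduct_mulVec_eq_zero hab (fun p hp => hu p (Or.inl hp)) hw
    have hww := hA.dotProduct_mulVec_eq_zero hab (fun p hp => hw p (by omega)) hw
    simp only [mulVec_add, add_dotProduct, dotProduct_add, huw.1, huw.2, hww.1]
    ring
  have hu0 := dotProduct_self_nonneg u
  have hw0 := dotProduct_self_nonneg w
  have huu := neg_le_of_sq_le_mul hS hu0 hu0 hε (sq_dotProduct_mulVec_le M u u)
  have huw := neg_le_of_sq_le_mul hS hu0 hw0 hε (sq_dotProduct_mulVec_le M u w)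
  have hwu := neg_le_of_sq_le_mul hS hu0 hw0 hε
    (mul_right_comm S (w ⬝ᵥ w) (u ⬝ᵥ u) ▸ sq_dotProduct_mulVec_le M w u)
  have hww := hM w hw
  have hpenalty : 3 * (S / ε * (u ⬝ᵥ u)) ≤ t * (u ⬝ᵥ A *ᵥ u) := by
    calc 3 * (S / ε * (u ⬝ᵥ u)) = t * (r * (u ⬝ᵥ u)) := by rw [ht]; field_simp
      _ ≤ t * (u ⬝ᵥ A *ᵥ u) := by gcongr; exact hAu u hu
  have hexpand : (u + w) ⬝ᵥ (M + t • A) *ᵥ (u + w) = u ⬝ᵥ M *ᵥ u + u ⬝ᵥ M *ᵥ w + w ⬝ᵥ M *ᵥ u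
      + w ⬝ᵥ M *ᵥ w + t * (u ⬝ᵥ A *ᵥ u) := by
    rw [add_mulVec, dotProduct_add, smul_mulVec, dotProduct_smul, smul_eq_mul, hAv]
    simp only [mulVec_add, add_dotProduct, dotProduct_add]
    ring
  rw [hexpand, hnorm]
  linarith [mul_nonneg hε.le hu0]

lemma nearlyPSDFrom_zero_of_posSemidef_blk {a : ℕ} {c : MS n} (hc : (blk n a n c).PosSemidef) :
    NearlyPSDFrom a 0 c := fun v hv => by
  have hv' : ∀ p : Fin n, p.1 < a ∨ n ≤ p.1 → v p = 0 :=
    fun p hp => hv p (hp.resolve_right (by omega))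
  simpa [dotProduct_mulVec_blk le_rfl c hv'] using
    hc.dotProduct_mulVec_nonneg (v ∘ blkEmb a n le_rfl)

lemma exists_nearlyPSDFrom_add_sum {c : MS n} (r : ℕ) {N : ℕ → ℕ} {A : ℕ → MS n}
    (hN : Monotone N) (hNr : N r ≤ n) (hA : ∀ j < r, staircase n (N j) (N (j + 1)) (A j))
    (hc : NearlyPSDFrom (N r) 0 c) {ε : ℝ} (hε : 0 < ε) :
    ∃ α : ℕ → ℝ, (∀ j < r, 0 ≤ α j) ∧
      NearlyPSDFrom (N 0) ε (c + ∑ j ∈ Finset.range r, α j • A j) := by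
  induction r generalizing N A ε with
  | zero => exact ⟨0, by simp, by simpa using hc.mono hε.le⟩
  | succ r ih =>
    obtain ⟨α, hα, hM⟩ := ih (N := fun j => N (j + 1)) (A := fun j => A (j + 1))
      (fun i j hij => hN (by omega)) hNr (fun j hj => hA (j + 1) (by omega)) hc (half_pos hε)
    obtain ⟨t, ht, hMt⟩ := hM.exists_add_smul (hN (Nat.zero_le 1)) ((hN (by omega)).trans hNr)
      (hA 0 (by omega)) hε
    refine ⟨fun j => Nat.casesOn j t α, ?_, ?_⟩
    · rintro (_ | j) hj
      exacts [ht, hα j (by omega)]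
    · simpa [Finset.sum_range_succ', add_assoc] using hMt

lemma NearlyPSDFrom.infDist_PSD_le {M : MS n} (hM : M.IsSymm) {ε : ℝ} (hε : 0 ≤ ε)
    (h : NearlyPSDFrom 0 ε M) : Metric.infDist M (PSD n) ≤ ε * ‖(1 : MS n)‖ := by
  have hmem : M + ε • (1 : MS n) ∈ PSD n := by
    refine PosSemidef.of_dotProduct_mulVec_nonneg (hM.add (isSymm_one.smul ε)) fun x => ?_
    have := h x (by simp)
    simp only [star_trivial, add_mulVec, smul_mulVec, one_mulVec, dotProduct_add,
      dotProduct_smul, smul_eq_mul]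
    linarith
  calc Metric.infDist M (PSD n) ≤ dist M (M + ε • (1 : MS n)) :=
        Metric.infDist_le_dist_of_mem hmem
    _ = ε * ‖(1 : MS n)‖ := by
        rw [dist_eq_norm, sub_add_cancel_left, norm_neg, norm_smul, Real.norm_of_nonneg hε]

end Staircase

theorem stmt15_general (n m : ℕ)
    (k : ℕ → ℕ)
    (N : ℕ → ℕ) (hN0 : N 0 = 0) (hNsucc : ∀ i, N (i + 1) = N i + k i)
    (hNm : N m ≤ n)
    (A : ℕ → MS n) (hAsymm : ∀ i < m, (A i).IsSymm)
    (hstair : ∀ i < m, staircase n (N i) (N (i + 1)) (A i))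
    (c' : MS n) (hc' : c'.IsSymm) (hc'blk : (blk n (N m) n c').PosSemidef) :
    (∀ ε : ℝ, 0 < ε → ∃ α : ℕ → ℝ, (∀ i < m, 0 ≤ α i) ∧
        Metric.infDist (c' + ∑ i ∈ Finset.range m, α i • A i) (PSD n) < ε) ∧
      sInf {r : ℝ | ∃ α : ℕ → ℝ, (∀ i < m, 0 ≤ α i) ∧
        r = Metric.infDist (c' + ∑ i ∈ Finset.range m, α i • A i) (PSD n)} = 0 := by
  have hN : Monotone N := monotone_nat_of_le_succ fun i => by rw [hNsucc]; omega
  have hsymm (α : ℕ → ℝ) : (c' + ∑ i ∈ Finset.range m, α i • A i).IsSymm :=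
    hc'.add <| Finset.sum_induction _ IsSymm (fun _ _ => IsSymm.add) isSymm_zero
      fun i hi => (hAsymm i (Finset.mem_range.mp hi)).smul _
  have hsmall : ∀ ε : ℝ, 0 < ε → ∃ α : ℕ → ℝ, (∀ i < m, 0 ≤ α i) ∧
      Metric.infDist (c' + ∑ i ∈ Finset.range m, α i • A i) (PSD n) < ε := by
    intro ε hε
    have hC := norm_nonneg (1 : MS n)
    obtain ⟨α, hα, hnear⟩ := exists_nearlyPSDFrom_add_sum m hN hNm hstair
      (nearlyPSDFrom_zero_of_posSemidef_blk hc'blk) (ε := ε / (‖(1 : MS n)‖ + 1))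
      (by positivity)
    rw [hN0] at hnear
    refine ⟨α, hα, (hnear.infDist_PSD_le (hsymm α) (by positivity)).trans_lt ?_⟩
    rw [div_mul_eq_mul_div, div_lt_iff₀ (by positivity)]
    linarith
  refine ⟨hsmall, csInf_eq_of_forall_ge_of_forall_gt_exists_lt ⟨_, 0, fun _ _ => le_rfl, rfl⟩
    ?_ fun w hw => ?_⟩
  · rintro _ ⟨α, -, rfl⟩
    exact Metric.infDist_nonneg
  · obtain ⟨α, hα, hlt⟩ := hsmall w hw
    exact ⟨_, ⟨α, hα, rfl⟩, hlt⟩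

/-- Given symmetric matrices `A 0, …, A (m−1)` in staircase shape with block sizes
`k 0, …, k (m−1)`, partial sums `N`, `N m ≤ n`, and a symmetric `c'` whose lower-right
`(n−N m)×(n−N m)` principal submatrix is positive semidefinite: for every `ε > 0`
there are nonnegative reals `α 0, …, α (m−1)` with
`dist(c' + Σ_i α i • A i, K_n) < ε`; in particular the infimum over all such
nonnegative coefficients of this distance is `0`. -/
theorem stmt15 (n m : ℕ)
    (k : ℕ → ℕ) (hk : ∀ i < m, 0 < k i)
    (N : ℕ → ℕ) (hN0 : N 0 = 0) (hNsucc : ∀ i, N (i + 1) = N i + k i)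
    (hNm : N m ≤ n)
    (A : ℕ → MS n) (hAsymm : ∀ i < m, (A i).IsSymm)
    (hstair : ∀ i < m, staircase n (N i) (N (i + 1)) (A i))
    (c' : MS n) (hc' : c'.IsSymm) (hc'blk : (blk n (N m) n c').PosSemidef) :
    (∀ ε : ℝ, 0 < ε → ∃ α : ℕ → ℝ, (∀ i < m, 0 ≤ α i) ∧
        Metric.infDist (c' + ∑ i ∈ Finset.range m, α i • A i) (PSD n) < ε) ∧
      sInf {r : ℝ | ∃ α : ℕ → ℝ, (∀ i < m, 0 ≤ α i) ∧
        r = Metric.infDist (c' + ∑ i ∈ Finset.range m, α i • A i) (PSD n)} = 0 :=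
  stmt15_general n m k N hN0 hNsucc hNm A hAsymm hstair c' hc' hc'blk
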